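/- arXiv:1311.6356 — 4 statements merged into one kernel-verified Lean document; each statement's English description precedes it below -/
import Mathlib

section
/- Let P and Q be 2-dimensional vector subspaces of R^4 (with the standard Euclidean inner product) intersecting trivially (P ∩ Q = {0}). Then there exist 2-dimensional subspaces τ₁ and τ₂ that are orthogonal complements of each other in R^4 such that τ₁ ∩ P, τ₁ ∩ Q, τ₂ ∩ P, τ₂ ∩ Q are each 1-dimensional, and τ₁ is orthogonal to P along τ₁ ∩ P and to Q along τ₁ ∩ Q (and similarly for τ₂). Concretely: there exist orthonormal bases {v_P, w_P} of P and {v_Q, w_Q} of Q with ⟨v_P, w_Q⟩ = ⟨v_Q, w_P⟩ = 0, and one may take τ₁ = span{v_P, v_Q}, τ₂ = span{w_P, w_Q}. -/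
/-!
Let `T : P → Q` be the orthogonal projection onto `Q`, restricted to `P`, so that
`⟪x, y⟫ = ⟪T x, y⟫` for `x ∈ P`, `y ∈ Q`. A singular value decomposition of `T` gives
orthonormal bases `(v_P, w_P)` of `P` and `(v_Q, w_Q)` of `Q` in which this pairing is diagonal.
Since `P ⊓ Q = ⊥`, the planes `span {v_P, v_Q}` and `span {w_P, w_Q}` meet `P` and `Q` in lines;
being orthogonal planes in `ℝ⁴`, they are orthogonal complements.
-/

open Module Submodule

open scoped RealInnerProductSpace

section GramSchmidt

open scoped InnerProductSpace

variable {𝕜 E ι : Type*} [RCLike 𝕜] [NormedAddCommGroup E] [InnerProductSpace 𝕜 E]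
  [FiniteDimensional 𝕜 E] [LinearOrder ι] [LocallyFiniteOrderBot ι] [WellFoundedLT ι]
  [Fintype ι]

theorem InnerProductSpace.inner_gramSchmidtOrthonormalBasis_eq_zero_of_orthogonal
    (h : finrank 𝕜 E = Fintype.card ι) {f : ι → E}
    (hf : Pairwise fun i j => ⟪f i, f j⟫_𝕜 = 0) {i j : ι} (hij : i ≠ j) :
    ⟪gramSchmidtOrthonormalBasis h f i, f j⟫_𝕜 = 0 := by
  by_cases hfj : f j = 0
  · rw [hfj, inner_zero_right]
  have hbj := gramSchmidtOrthonormalBasis_apply_of_orthogonal h hf hfj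
  have hnorm : (‖f j‖ : 𝕜) ≠ 0 := by exact_mod_cast norm_ne_zero_iff.mpr hfj
  rw [← inv_smul_smul₀ (inv_ne_zero hnorm) (f j), ← hbj, inner_smul_right,
    (gramSchmidtOrthonormalBasis h f).orthonormal.2 hij, mul_zero]

end GramSchmidt

section SingularValueDecomposition

open scoped InnerProductSpace

variable {𝕜 E F : Type*} [RCLike 𝕜] [NormedAddCommGroup E] [InnerProductSpace 𝕜 E]
  [NormedAddCommGroup F] [InnerProductSpace 𝕜 F] [FiniteDimensional 𝕜 E] [FiniteDimensional 𝕜 F]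

/-- The eigenvectors of `T† T` have pairwise orthogonal images under `T`; Gram–Schmidt applied to
these images gives the basis of `F`. -/
theorem LinearMap.exists_orthonormalBasis_inner_apply_eq_zero {n : ℕ}
    (hE : finrank 𝕜 E = n) (hF : finrank 𝕜 F = n) (T : E →ₗ[𝕜] F) :
    ∃ (e : OrthonormalBasis (Fin n) 𝕜 E) (f : OrthonormalBasis (Fin n) 𝕜 F),
      Pairwise fun i j => ⟪T (e i), f j⟫_𝕜 = 0 := by
  set hT := T.isSymmetric_adjoint_comp_self
  set e := hT.eigenvectorBasis hE
  have horth : Pairwise fun i j => ⟪T (e i), T (e j)⟫_𝕜 = 0 := fun i j hij => by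
    dsimp only
    rw [← LinearMap.adjoint_inner_right, ← LinearMap.comp_apply, hT.apply_eigenvectorBasis,
      inner_smul_right, e.orthonormal.2 hij, mul_zero]
  have hF' : finrank 𝕜 F = Fintype.card (Fin n) := by rw [hF, Fintype.card_fin]
  refine ⟨e, InnerProductSpace.gramSchmidtOrthonormalBasis hF' (fun i => T (e i)),
    fun i j hij => ?_⟩
  dsimp only
  rw [← inner_conj_symm,
    InnerProductSpace.inner_gramSchmidtOrthonormalBasis_eq_zero_of_orthogonal hF' horth hij.symm,
    map_zero]

end SingularValueDecomposition

theorem Submodule.span_pair_inf_eq_span_singleton {R M : Type*} [Ring R] [AddCommGroup M]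
    [Module R M] {P Q : Submodule R M} {x y : M} (h : Disjoint P Q) (hx : x ∈ P) (hy : y ∈ Q) :
    span R {x, y} ⊓ P = R ∙ x := by
  have hyP : (R ∙ y) ⊓ P = ⊥ :=
    (h.symm.mono_left ((span_singleton_le_iff_mem y Q).mpr hy)).eq_bot
  rw [span_insert, sup_inf_assoc_of_le _ ((span_singleton_le_iff_mem x P).mpr hx), hyP,
    sup_bot_eq]

section Disjoint

variable {K V : Type*} [DivisionRing K] [AddCommGroup V] [Module K V] {P Q : Submodule K V}
  {x y : V}

theorem Submodule.finrank_span_pair_inf_left (h : Disjoint P Q) (hx : x ∈ P) (hy : y ∈ Q)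
    (hx0 : x ≠ 0) : finrank K (span K {x, y} ⊓ P : Submodule K V) = 1 := by
  rw [span_pair_inf_eq_span_singleton h hx hy, finrank_span_singleton hx0]

theorem Submodule.finrank_span_pair_inf_right (h : Disjoint P Q) (hx : x ∈ P) (hy : y ∈ Q)
    (hy0 : y ≠ 0) : finrank K (span K {x, y} ⊓ Q : Submodule K V) = 1 := by
  rw [Set.pair_comm]
  exact finrank_span_pair_inf_left h.symm hy hx hy0

theorem Submodule.finrank_span_pair_of_disjoint (h : Disjoint P Q) (hx : x ∈ P) (hy : y ∈ Q)
    (hx0 : x ≠ 0) (hy0 : y ≠ 0) : finrank K (span K {x, y}) = 2 := by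
  have hxy : (K ∙ x) ⊓ (K ∙ y) = ⊥ :=
    (h.mono ((span_singleton_le_iff_mem x P).mpr hx)
      ((span_singleton_le_iff_mem y Q).mpr hy)).eq_bot
  have hsum := finrank_sup_add_finrank_inf_eq (K ∙ x) (K ∙ y)
  rw [hxy, finrank_bot, finrank_span_singleton hx0, finrank_span_singleton hy0, ← span_insert]
    at hsum
  simpa using hsum

end Disjoint

theorem Submodule.eq_orthogonal_of_isOrtho_of_finrank_add_eq {𝕜 E : Type*} [RCLike 𝕜]
    [NormedAddCommGroup E] [InnerProductSpace 𝕜 E] [FiniteDimensional 𝕜 E]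
    {U V : Submodule 𝕜 E} (h : U ⟂ V) (hdim : finrank 𝕜 U + finrank 𝕜 V = finrank 𝕜 E) :
    U = Vᗮ :=
  eq_of_le_of_finrank_eq (isOrtho_iff_le.mp h)
    (finrank_add_finrank_orthogonal' (by rw [← hdim, add_comm])).symm

/-- If `P` and `Q` are 2-dimensional subspaces of `ℝ⁴` intersecting trivially,
then there are orthonormal bases `{v_P, w_P}` of `P` and `{v_Q, w_Q}` of `Q` with
`⟪v_P, w_Q⟫ = ⟪v_Q, w_P⟫ = 0`, such that `τ₁ = span {v_P, v_Q}` and `τ₂ = span {w_P, w_Q}` are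
orthogonal complements of each other and each meets `P` and `Q` in a 1-dimensional subspace. -/
theorem exists_orthogonal_invariant_planes
    (P Q : Submodule ℝ (EuclideanSpace ℝ (Fin 4)))
    (hP : Module.finrank ℝ P = 2) (hQ : Module.finrank ℝ Q = 2)
    (hPQ : P ⊓ Q = ⊥) :
    ∃ vP wP vQ wQ : EuclideanSpace ℝ (Fin 4),
      vP ∈ P ∧ wP ∈ P ∧ vQ ∈ Q ∧ wQ ∈ Q ∧
      ‖vP‖ = 1 ∧ ‖wP‖ = 1 ∧ ‖vQ‖ = 1 ∧ ‖wQ‖ = 1 ∧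
      ⟪vP, wP⟫ = 0 ∧ ⟪vQ, wQ⟫ = 0 ∧
      ⟪vP, wQ⟫ = 0 ∧ ⟪vQ, wP⟫ = 0 ∧
      Submodule.span ℝ {wP, wQ} = (Submodule.span ℝ {vP, vQ})ᗮ ∧
      Module.finrank ℝ (Submodule.span ℝ {vP, vQ} ⊓ P :
        Submodule ℝ (EuclideanSpace ℝ (Fin 4))) = 1 ∧
      Module.finrank ℝ (Submodule.span ℝ {vP, vQ} ⊓ Q :
        Submodule ℝ (EuclideanSpace ℝ (Fin 4))) = 1 ∧
      Module.finrank ℝ (Submodule.span ℝ {wP, wQ} ⊓ P :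
        Submodule ℝ (EuclideanSpace ℝ (Fin 4))) = 1 ∧
      Module.finrank ℝ (Submodule.span ℝ {wP, wQ} ⊓ Q :
        Submodule ℝ (EuclideanSpace ℝ (Fin 4))) = 1 := by
  obtain ⟨e, f, hT⟩ := LinearMap.exists_orthonormalBasis_inner_apply_eq_zero hP hQ
    ((Q.orthogonalProjectionOnto : _ →ₗ[ℝ] Q) ∘ₗ P.subtype)
  have hef : ∀ i j, i ≠ j → ⟪(e i : EuclideanSpace ℝ (Fin 4)), f j⟫ = 0 := fun i j hij => by
    simpa using hT hij
  have hne : ∀ {S : Submodule ℝ (EuclideanSpace ℝ (Fin 4))} (b : OrthonormalBasis (Fin 2) ℝ S) i,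
      (b i : EuclideanSpace ℝ (Fin 4)) ≠ 0 := fun b i => by
    simpa using b.orthonormal.ne_zero i
  have hdisj : Disjoint P Q := disjoint_iff.mpr hPQ
  have hortho : span ℝ {(e 1 : EuclideanSpace ℝ (Fin 4)), (f 1 : EuclideanSpace ℝ (Fin 4))} ⟂
      span ℝ {(e 0 : EuclideanSpace ℝ (Fin 4)), (f 0 : EuclideanSpace ℝ (Fin 4))} := by
    rw [isOrtho_span]
    simp only [Set.mem_insert_iff, Set.mem_singleton_iff]
    rintro u (rfl | rfl) v (rfl | rfl)
    · exact e.orthonormal.2 (by decide)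
    · exact hef 1 0 (by decide)
    · rw [real_inner_comm]; exact hef 0 1 (by decide)
    · exact f.orthonormal.2 (by decide)
  refine ⟨e 0, e 1, f 0, f 1, (e 0).2, (e 1).2, (f 0).2, (f 1).2,
    e.norm_eq_one 0, e.norm_eq_one 1, f.norm_eq_one 0, f.norm_eq_one 1,
    e.orthonormal.2 (by decide), f.orthonormal.2 (by decide),
    hef 0 1 (by decide), by rw [real_inner_comm]; exact hef 1 0 (by decide),
    eq_orthogonal_of_isOrtho_of_finrank_add_eq hortho ?_,
    finrank_span_pair_inf_left hdisj (e 0).2 (f 0).2 (hne e 0),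
    finrank_span_pair_inf_right hdisj (e 0).2 (f 0).2 (hne f 0),
    finrank_span_pair_inf_left hdisj (e 1).2 (f 1).2 (hne e 1),
    finrank_span_pair_inf_right hdisj (e 1).2 (f 1).2 (hne f 1)⟩
  rw [finrank_span_pair_of_disjoint hdisj (e 1).2 (f 1).2 (hne e 1) (hne f 1),
    finrank_span_pair_of_disjoint hdisj (e 0).2 (f 0).2 (hne e 0) (hne f 0),
    finrank_euclideanSpace_fin]
end

section
/- Let P and Q be 2-dimensional affine subspaces (planes) of hyperbolic 4-space H^4 that intersect in exactly one point p, and let H_P and H_Q be the respective half-turns (isometric involutions whose fixed-point sets are exactly P and Q). Then the composition H_P ∘ H_Q fixes p and fixes no other point of H^4. -/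
/-- The Lorentz bilinear form of signature `(4,1)` on `ℝ⁵`. -/
noncomputable def lorentz (x y : Fin 5 → ℝ) : ℝ :=
  x 0 * y 0 + x 1 * y 1 + x 2 * y 2 + x 3 * y 3 - x 4 * y 4

/-- The hyperboloid model of hyperbolic 4-space `ℍ⁴`. -/
def H4 : Type := {x : Fin 5 → ℝ // lorentz x x = -1 ∧ 0 < x 4}

/-- An isometry of `ℍ⁴`: a bijection preserving the restricted Lorentz form
(equivalently, the hyperbolic distance `cosh d(x,y) = -⟨x,y⟩_L`). -/
def IsIsom (f : H4 → H4) : Prop :=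
  Function.Bijective f ∧ ∀ x y : H4, lorentz (f x).1 (f y).1 = lorentz x.1 y.1

/-- A (totally geodesic 2-dimensional) plane of `ℍ⁴`: the nonempty intersection of the
hyperboloid with a 3-dimensional (time-like) vector subspace. -/
def IsPlane (P : Set H4) : Prop :=
  ∃ V : Submodule ℝ (Fin 5 → ℝ), Module.finrank ℝ V = 3 ∧
    P = {x : H4 | x.1 ∈ V} ∧ P.Nonempty

/-- The half-turn about the plane `P`: the (unique, orientation-preserving) isometric
involution of `ℍ⁴` whose fixed-point set is exactly `P`. -/
def IsHalfTurn (f : H4 → H4) (P : Set H4) : Prop :=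
  IsIsom f ∧ f ∘ f = id ∧ {x : H4 | f x = x} = P

/-- Normalize a small perturbation of a hyperboloid point back onto the hyperboloid. -/
lemma exists_perturb (v u : Fin 5 → ℝ) (hv : lorentz v v = -1) (hv4 : 0 < v 4) :
    ∃ (z : H4) (c ε : ℝ), 0 < c ∧ 0 < ε ∧ z.1 = c • (v + ε • u) := by
  set a := lorentz v u with ha
  set b := lorentz u u with hb
  set ε : ℝ := min (1 / (2 * (2 * |a| + |b| + 1))) (v 4 / (2 * (|u 4| + 1))) with hε
  have hεpos : 0 < ε := by
    apply lt_min <;> positivity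
  have hε1 : ε ≤ 1 / (2 * (2 * |a| + |b| + 1)) := min_le_left _ _
  have hε2 : ε ≤ v 4 / (2 * (|u 4| + 1)) := min_le_right _ _
  have habs1 : a ≤ |a| := le_abs_self a
  have habs2 : -a ≤ |a| := neg_le_abs a
  have habs3 : b ≤ |b| := le_abs_self b
  have habs4 : (0:ℝ) ≤ |a| := abs_nonneg a
  have habs5 : (0:ℝ) ≤ |b| := abs_nonneg b
  have hεle1 : ε ≤ 1 := by
    have h1 : 1 / (2 * (2 * |a| + |b| + 1)) ≤ 1 := by
      rw [div_le_one (by positivity)]; nlinarith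
    linarith
  have ht : 0 < 1 - (2 * ε * a + ε ^ 2 * b) := by
    have h1 : ε * (2 * (2 * |a| + |b| + 1)) ≤ 1 := by
      rw [← le_div_iff₀ (by positivity)] at *; exact hε1
    nlinarith [sq_nonneg ε, mul_le_mul_of_nonneg_left habs3 (sq_nonneg ε)]
  set t : ℝ := 1 - (2 * ε * a + ε ^ 2 * b) with htdef
  have hz4 : 0 < v 4 + ε * u 4 := by
    have h1 : ε * (2 * (|u 4| + 1)) ≤ v 4 := by
      rw [← le_div_iff₀ (by positivity)]; exact hε2
    have h2 : -u 4 ≤ |u 4| := neg_le_abs _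
    have h3 : (0:ℝ) ≤ |u 4| := abs_nonneg _
    nlinarith
  set c : ℝ := (Real.sqrt t)⁻¹ with hc
  have hsq : Real.sqrt t > 0 := Real.sqrt_pos.mpr ht
  have hcpos : 0 < c := by positivity
  have hc2 : c ^ 2 * t = 1 := by
    rw [hc, inv_pow, Real.sq_sqrt ht.le, inv_mul_cancel₀ ht.ne']
  have hexp : lorentz (c • (v + ε • u)) (c • (v + ε • u))
      = c ^ 2 * (lorentz v v + 2 * ε * a + ε ^ 2 * b) := by
    simp only [lorentz, ha, hb, Pi.smul_apply, Pi.add_apply, smul_eq_mul]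
    ring
  have hzH : lorentz (c • (v + ε • u)) (c • (v + ε • u)) = -1 ∧ 0 < (c • (v + ε • u)) 4 := by
    constructor
    · rw [hexp, hv]
      have : -1 + 2 * ε * a + ε ^ 2 * b = -t := by rw [htdef]; ring
      rw [this]
      nlinarith [hc2]
    · have : (c • (v + ε • u)) 4 = c * (v 4 + ε * u 4) := by
        simp [Pi.smul_apply, Pi.add_apply, smul_eq_mul]
      rw [this]; positivity
  exact ⟨⟨c • (v + ε • u), hzH⟩, c, ε, hcpos, hεpos, rfl⟩

/-- If `w` is Lorentz-orthogonal to every point of a plane, it is orthogonal to the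
whole underlying subspace. -/
lemma ortho_of_ortho_plane {w : Fin 5 → ℝ} {P : Set H4} {V : Submodule ℝ (Fin 5 → ℝ)}
    (hV : P = {x : H4 | x.1 ∈ V}) (hne : P.Nonempty)
    (hw : ∀ q ∈ P, lorentz w q.1 = 0) : ∀ u ∈ V, lorentz w u = 0 := by
  intro u hu
  obtain ⟨v, hv⟩ := hne
  have hvV : v.1 ∈ V := by rw [hV] at hv; exact hv
  obtain ⟨z, c, ε, hcpos, hεpos, hz⟩ := exists_perturb v.1 u v.2.1 v.2.2
  have hzV : z.1 ∈ V := by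
    rw [hz]; exact V.smul_mem c (V.add_mem hvV (V.smul_mem ε hu))
  have hzP : z ∈ P := by rw [hV]; exact hzV
  have h1 : lorentz w z.1 = 0 := hw z hzP
  have h2 : lorentz w v.1 = 0 := hw v hv
  have hexp : lorentz w (c • (v.1 + ε • u)) = c * (lorentz w v.1 + ε * lorentz w u) := by
    simp only [lorentz, Pi.smul_apply, Pi.add_apply, smul_eq_mul]
    ring
  rw [hz, hexp, h2, zero_add] at h1
  rcases mul_eq_zero.mp h1 with h | h
  · exact absurd h hcpos.ne'
  · rcases mul_eq_zero.mp h with h' | h'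
    · exact absurd h' hεpos.ne'
    · exact h'

/-- If planes `P` and `Q` of `ℍ⁴` intersect in exactly one point `p`, then the
composition of the half-turns `H_P ∘ H_Q` fixes `p` and no other point of `ℍ⁴`. -/
theorem halfTurn_comp_fixes_unique_point
    (P Q : Set H4) (p : H4) (hP : IsPlane P) (hQ : IsPlane Q)
    (hPQ : P ∩ Q = {p})
    (f g : H4 → H4) (hf : IsHalfTurn f P) (hg : IsHalfTurn g Q) :
    {x : H4 | f (g x) = x} = {p} := by
  obtain ⟨V₁, hV₁rk, hV₁, hPne⟩ := hP
  obtain ⟨V₂, hV₂rk, hV₂, hQne⟩ := hQ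
  have hpPQ : p ∈ P ∩ Q := by rw [hPQ]; exact rfl
  have hpP : p ∈ P := hpPQ.1
  have hpQ : p ∈ Q := hpPQ.2
  have hfp : f p = p := by
    have := hf.2.2; rw [Set.ext_iff] at this; exact (this p).mpr hpP
  have hgp : g p = p := by
    have := hg.2.2; rw [Set.ext_iff] at this; exact (this p).mpr hpQ
  -- `p.1 ≠ 0`
  have hpne0 : p.1 ≠ 0 := by
    intro h
    have := p.2.2
    rw [h] at this
    simp at this
  -- The intersection V₁ ⊓ V₂ is contained in span of p.1
  have hinf_le : V₁ ⊓ V₂ ≤ Submodule.span ℝ {p.1} := by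
    intro u hu
    obtain ⟨z, c, ε, hcpos, hεpos, hz⟩ := exists_perturb p.1 u p.2.1 p.2.2
    have hzV : z.1 ∈ V₁ ⊓ V₂ := by
      have hp1 : p.1 ∈ V₁ := by rw [hV₁] at hpP; exact hpP
      have hp2 : p.1 ∈ V₂ := by rw [hV₂] at hpQ; exact hpQ
      constructor
      · rw [hz]; exact V₁.smul_mem c (V₁.add_mem hp1 (V₁.smul_mem ε hu.1))
      · rw [hz]; exact V₂.smul_mem c (V₂.add_mem hp2 (V₂.smul_mem ε hu.2))
    have hzP : z ∈ P ∩ Q := by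
      constructor
      · rw [hV₁]; exact hzV.1
      · rw [hV₂]; exact hzV.2
    rw [hPQ] at hzP
    have hzp : z = p := hzP
    have : c • (p.1 + ε • u) = p.1 := by rw [← hz, hzp]
    have hu_eq : u = (ε⁻¹ * (c⁻¹ - 1)) • p.1 := by
      have h1 : p.1 + ε • u = c⁻¹ • p.1 := by
        have h := congrArg (fun w => c⁻¹ • w) this
        simp only [smul_smul, inv_mul_cancel₀ hcpos.ne', one_smul] at h
        exact h
      have h2 : ε • u = c⁻¹ • p.1 - p.1 := by
        rw [eq_sub_iff_add_eq, add_comm]; exact h1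
      have h3 : u = ε⁻¹ • (c⁻¹ • p.1 - p.1) := by
        rw [← h2, smul_smul, inv_mul_cancel₀ hεpos.ne', one_smul]
      rw [h3]
      rw [smul_sub, smul_smul]
      module
    rw [hu_eq]
    exact Submodule.smul_mem _ _ (Submodule.mem_span_singleton_self _)
  -- hence V₁ ⊔ V₂ = ⊤
  have hinf_rk : Module.finrank ℝ ↥(V₁ ⊓ V₂) ≤ 1 := by
    calc Module.finrank ℝ ↥(V₁ ⊓ V₂) ≤ Module.finrank ℝ ↥(Submodule.span ℝ {p.1}) :=
          Submodule.finrank_mono hinf_le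
      _ = 1 := finrank_span_singleton hpne0
  have hsup_rk : Module.finrank ℝ ↥(V₁ ⊔ V₂) = 5 := by
    have h1 := Submodule.finrank_sup_add_finrank_inf_eq V₁ V₂
    have h2 : Module.finrank ℝ ↥(V₁ ⊔ V₂) ≤ 5 := by
      have := Submodule.finrank_le (V₁ ⊔ V₂)
      rwa [Module.finrank_fin_fun] at this
    omega
  have hsup_top : V₁ ⊔ V₂ = ⊤ := by
    apply Submodule.eq_top_of_finrank_eq
    rw [hsup_rk, Module.finrank_fin_fun]
  -- Now prove the set equality
  ext x
  simp only [Set.mem_setOf_eq, Set.mem_singleton_iff]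
  constructor
  · intro hx
    -- `y := g x`, and `f x = y = g x`
    set y : H4 := g x with hy
    have hfy : f y = x := hx
    have hfx : f x = y := by
      have h := congrFun hf.2.1 y
      simp only [Function.comp_apply, id_eq] at h
      rw [hfy] at h
      exact h
    -- orthogonality of w := x.1 - y.1 to all of P and Q
    have hwP : ∀ q ∈ P, lorentz (x.1 - y.1) q.1 = 0 := by
      intro q hq
      have hq' : f q = q := by
        have := hf.2.2; rw [Set.ext_iff] at this; exact (this q).mpr hq
      have h1 : lorentz (f x).1 (f q).1 = lorentz x.1 q.1 := hf.1.2 x q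
      rw [hfx, hq'] at h1
      simp only [lorentz, Pi.sub_apply]
      simp only [lorentz] at h1
      linarith
    have hwQ : ∀ q ∈ Q, lorentz (x.1 - y.1) q.1 = 0 := by
      intro q hq
      have hq' : g q = q := by
        have := hg.2.2; rw [Set.ext_iff] at this; exact (this q).mpr hq
      have h1 : lorentz (g x).1 (g q).1 = lorentz x.1 q.1 := hg.1.2 x q
      rw [← hy, hq'] at h1
      simp only [lorentz, Pi.sub_apply]
      simp only [lorentz] at h1
      linarith
    have hwV₁ := ortho_of_ortho_plane hV₁ hPne hwP
    have hwV₂ := ortho_of_ortho_plane hV₂ hQne hwQ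
    -- w is orthogonal to everything
    have hwall : ∀ v : Fin 5 → ℝ, lorentz (x.1 - y.1) v = 0 := by
      intro v
      have hv : v ∈ V₁ ⊔ V₂ := by rw [hsup_top]; trivial
      obtain ⟨a, haV, b, hbV, hab⟩ := Submodule.mem_sup.mp hv
      have hadd : lorentz (x.1 - y.1) (a + b)
          = lorentz (x.1 - y.1) a + lorentz (x.1 - y.1) b := by
        simp only [lorentz, Pi.add_apply]; ring
      rw [← hab, hadd, hwV₁ a haV, hwV₂ b hbV, add_zero]
    -- hence w = 0
    have hw0 : x.1 - y.1 = 0 := by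
      funext i
      have h0 := hwall (Pi.single 0 1)
      have h1 := hwall (Pi.single 1 1)
      have h2 := hwall (Pi.single 2 1)
      have h3 := hwall (Pi.single 3 1)
      have h4 := hwall (Pi.single 4 1)
      simp only [lorentz, Pi.single_apply, show ((0:Fin 5) ≠ 1) by decide,
        show ((0:Fin 5) ≠ 2) by decide, show ((0:Fin 5) ≠ 3) by decide,
        show ((0:Fin 5) ≠ 4) by decide, show ((1:Fin 5) ≠ 0) by decide,
        show ((1:Fin 5) ≠ 2) by decide, show ((1:Fin 5) ≠ 3) by decide,
        show ((1:Fin 5) ≠ 4) by decide, show ((2:Fin 5) ≠ 0) by decide,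
        show ((2:Fin 5) ≠ 1) by decide, show ((2:Fin 5) ≠ 3) by decide,
        show ((2:Fin 5) ≠ 4) by decide, show ((3:Fin 5) ≠ 0) by decide,
        show ((3:Fin 5) ≠ 1) by decide, show ((3:Fin 5) ≠ 2) by decide,
        show ((3:Fin 5) ≠ 4) by decide, show ((4:Fin 5) ≠ 0) by decide,
        show ((4:Fin 5) ≠ 1) by decide, show ((4:Fin 5) ≠ 2) by decide,
        show ((4:Fin 5) ≠ 3) by decide,
        if_true, if_false, ite_false, ite_true, mul_one, mul_zero, add_zero, zero_add,
        sub_zero, zero_sub] at h0 h1 h2 h3 h4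
      simp only [Pi.sub_apply] at h0 h1 h2 h3 h4
      fin_cases i <;> simp <;> linarith
    have hxy : x = y := Subtype.ext (by
      have : x.1 = y.1 := by
        have := sub_eq_zero.mp hw0
        exact this
      exact this)
    -- so x is fixed by both f and g
    have hxP : x ∈ P := by
      rw [← hf.2.2]
      show f x = x
      rw [hfx, ← hxy]
    have hxQ : x ∈ Q := by
      rw [← hg.2.2]
      show g x = x
      rw [← hy, ← hxy]
    have : x ∈ P ∩ Q := ⟨hxP, hxQ⟩
    rw [hPQ] at this
    exact this
  · intro hx
    rw [hx, hgp, hfp]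
end

section
/- Let P and Q be distinct planes in H^4 intersecting in a geodesic line L. Then H_P ∘ H_Q is a type-I elliptic isometry: its fixed-point set is exactly the plane τ orthogonal to the hyperplane spanned by P ∪ Q along L. -/
/-- The Lorentz-orthogonal complement of a subspace `S` of `ℝ^{4,1}`. -/
noncomputable def lorentzOrtho (S : Submodule ℝ (Fin 5 → ℝ)) :
    Submodule ℝ (Fin 5 → ℝ) where
  carrier := {v | ∀ w ∈ S, lorentz v w = 0}
  zero_mem' := by intro w _; simp [lorentz]
  add_mem' := by
    intro a b ha hb w hw
    have h : lorentz (a + b) w = lorentz a w + lorentz b w := by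
      simp only [lorentz, Pi.add_apply]; ring
    rw [h, ha w hw, hb w hw, add_zero]
  smul_mem' := by
    intro c a ha w hw
    have h : lorentz (c • a) w = c * lorentz a w := by
      simp only [lorentz, Pi.smul_apply, smul_eq_mul]; ring
    rw [h, ha w hw, mul_zero]

/-!
A half-turn `f` about the plane cut out by `V` acts as the Lorentz reflection in `V`:
`f x + x ∈ V` and `f x - x ⊥ V` for every `x`. The second relation holds because `f` fixes the
points of `V`, and these span `V` since `V` contains a timelike vector. For the first, `x + f x` is
timelike by the reverse Cauchy–Schwarz inequality, and the point of `ℍ⁴` on its line is fixed by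
the isometric involution `f` (its Lorentz product with its image is `-1`), hence lies in `V`.
As `V` and `W` are not degenerate, `x = a + b` with `a ∈ V ⊓ W` and `b ⊥ V ⊔ W` is reflected by
`g` to `a - b` and back by `f` to `a + b`; conversely a fixed point `x` of `f ∘ g` decomposes as
`x = (x + g x) / 2 - (g x - x) / 2`.
-/

lemma lorentz_comm (x y : Fin 5 → ℝ) : lorentz x y = lorentz y x := by
  simp only [lorentz]; ring

lemma lorentz_add_left (x y z : Fin 5 → ℝ) :
    lorentz (x + y) z = lorentz x z + lorentz y z := by
  simp only [lorentz, Pi.add_apply]; ring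

lemma lorentz_add_right (x y z : Fin 5 → ℝ) :
    lorentz x (y + z) = lorentz x y + lorentz x z := by
  simp only [lorentz, Pi.add_apply]; ring

lemma lorentz_sub_left (x y z : Fin 5 → ℝ) :
    lorentz (x - y) z = lorentz x z - lorentz y z := by
  simp only [lorentz, Pi.sub_apply]; ring

lemma lorentz_sub_right (x y z : Fin 5 → ℝ) :
    lorentz x (y - z) = lorentz x y - lorentz x z := by
  simp only [lorentz, Pi.sub_apply]; ring

lemma lorentz_smul_left (c : ℝ) (x y : Fin 5 → ℝ) : lorentz (c • x) y = c * lorentz x y := by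
  simp only [lorentz, Pi.smul_apply, smul_eq_mul]; ring

lemma lorentz_smul_right (c : ℝ) (x y : Fin 5 → ℝ) : lorentz x (c • y) = c * lorentz x y := by
  simp only [lorentz, Pi.smul_apply, smul_eq_mul]; ring

lemma mem_lorentzOrtho {S : Submodule ℝ (Fin 5 → ℝ)} {v : Fin 5 → ℝ} :
    v ∈ lorentzOrtho S ↔ ∀ w ∈ S, lorentz v w = 0 :=
  Iff.rfl

lemma lorentzOrtho_sup (V W : Submodule ℝ (Fin 5 → ℝ)) :
    lorentzOrtho (V ⊔ W) = lorentzOrtho V ⊓ lorentzOrtho W := by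
  ext v
  simp only [Submodule.mem_inf, mem_lorentzOrtho]
  refine ⟨fun h => ⟨fun w hw => h w (Submodule.mem_sup_left hw),
    fun w hw => h w (Submodule.mem_sup_right hw)⟩, fun ⟨hV, hW⟩ w hw => ?_⟩
  obtain ⟨a, ha, b, hb, rfl⟩ := Submodule.mem_sup.1 hw
  rw [lorentz_add_right, hV a ha, hW b hb, add_zero]

lemma eq_zero_of_lorentz_self_nonpos {a u : Fin 5 → ℝ} (ha : lorentz a a < 0)
    (hua : lorentz u a = 0) (huu : lorentz u u ≤ 0) : u = 0 := by
  simp only [lorentz] at ha hua huu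
  set S := u 0 ^ 2 + u 1 ^ 2 + u 2 ^ 2 + u 3 ^ 2
  set A := a 0 ^ 2 + a 1 ^ 2 + a 2 ^ 2 + a 3 ^ 2
  have hCS : (u 0 * a 0 + u 1 * a 1 + u 2 * a 2 + u 3 * a 3) ^ 2 ≤ S * A := by
    nlinarith [sq_nonneg (u 0 * a 1 - u 1 * a 0), sq_nonneg (u 0 * a 2 - u 2 * a 0),
      sq_nonneg (u 0 * a 3 - u 3 * a 0), sq_nonneg (u 1 * a 2 - u 2 * a 1),
      sq_nonneg (u 1 * a 3 - u 3 * a 1), sq_nonneg (u 2 * a 3 - u 3 * a 2)]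
  have hSu : S ≤ u 4 ^ 2 := by linarith
  have hAa : A < a 4 ^ 2 := by linarith
  have hu4 : u 4 = 0 := by
    have h : u 4 ^ 2 * a 4 ^ 2 ≤ u 4 ^ 2 * A :=
      calc u 4 ^ 2 * a 4 ^ 2 = (u 0 * a 0 + u 1 * a 1 + u 2 * a 2 + u 3 * a 3) ^ 2 := by
            rw [← mul_pow]; congr 1; linarith
        _ ≤ S * A := hCS
        _ ≤ u 4 ^ 2 * A := mul_le_mul_of_nonneg_right hSu (by positivity)
    have : u 4 ^ 2 ≤ 0 := by nlinarith
    exact pow_eq_zero_iff (n := 2) two_ne_zero |>.1 (le_antisymm this (sq_nonneg _))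
  have hS0 : S ≤ 0 := by rw [hu4] at hSu; simpa using hSu
  have hsq := fun i => sq_nonneg (u i)
  have hzero : ∀ i, u i ^ 2 ≤ 0 → u i = 0 := fun i h =>
    pow_eq_zero_iff two_ne_zero |>.1 (le_antisymm h (hsq i))
  funext i
  fin_cases i
  · exact hzero 0 (by linarith [hsq 1, hsq 2, hsq 3])
  · exact hzero 1 (by linarith [hsq 0, hsq 2, hsq 3])
  · exact hzero 2 (by linarith [hsq 0, hsq 1, hsq 3])
  · exact hzero 3 (by linarith [hsq 0, hsq 1, hsq 2])
  · exact hu4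

lemma H4.one_le_coord_four (x : H4) : 1 ≤ x.1 4 := by
  have h := x.2.1
  simp only [lorentz] at h
  nlinarith [x.2.2, sq_nonneg (x.1 0), sq_nonneg (x.1 1), sq_nonneg (x.1 2), sq_nonneg (x.1 3)]

lemma H4.lorentz_le_neg_one (x y : H4) : lorentz x.1 y.1 ≤ -1 := by
  have hx := x.2.1
  have hy := y.2.1
  have hx4 := x.one_le_coord_four
  have hy4 := y.one_le_coord_four
  simp only [lorentz] at hx hy ⊢
  set d := x.1 0 * y.1 0 + x.1 1 * y.1 1 + x.1 2 * y.1 2 + x.1 3 * y.1 3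
  -- Cauchy–Schwarz gives `d² ≤ (x₄² - 1)(y₄² - 1)`, and this is at most `(x₄y₄ - 1)²`.
  have hCS : d ^ 2 ≤ (x.1 4 * y.1 4 - 1) ^ 2 := by
    nlinarith [sq_nonneg (x.1 0 * y.1 1 - x.1 1 * y.1 0), sq_nonneg (x.1 0 * y.1 2 - x.1 2 * y.1 0),
      sq_nonneg (x.1 0 * y.1 3 - x.1 3 * y.1 0), sq_nonneg (x.1 1 * y.1 2 - x.1 2 * y.1 1),
      sq_nonneg (x.1 1 * y.1 3 - x.1 3 * y.1 1), sq_nonneg (x.1 2 * y.1 3 - x.1 3 * y.1 2),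
      sq_nonneg (x.1 4 - y.1 4)]
  linarith [(abs_le_of_sq_le_sq' hCS (by nlinarith)).2]

lemma H4.lorentz_self_neg (x : H4) : lorentz x.1 x.1 < 0 := by
  rw [x.2.1]; norm_num

lemma H4.eq_of_lorentz_eq_neg_one {x y : H4} (h : lorentz x.1 y.1 = -1) : x = y := by
  have hx : lorentz x.1 x.1 = -1 := x.2.1
  have hy : lorentz y.1 y.1 = -1 := y.2.1
  have hyx : lorentz y.1 x.1 = -1 := by rw [lorentz_comm, h]
  refine Subtype.ext (sub_eq_zero.1 (eq_zero_of_lorentz_self_nonpos (a := x.1) ?_ ?_ ?_))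
  · linarith
  · rw [lorentz_sub_left, hx, hyx, sub_self]
  · rw [lorentz_sub_left, lorentz_sub_right, lorentz_sub_right, hx, hy, h, hyx]; norm_num

lemma exists_smul_mem_H4 {v : Fin 5 → ℝ} (hv : lorentz v v < 0) :
    ∃ t : ℝ, t ≠ 0 ∧ ∃ x : H4, x.1 = t • v := by
  have hv4 : v 4 ≠ 0 := by
    intro h
    simp only [lorentz, h] at hv
    nlinarith [sq_nonneg (v 0), sq_nonneg (v 1), sq_nonneg (v 2), sq_nonneg (v 3)]
  set s := Real.sqrt (-lorentz v v)
  have hs : 0 < s := Real.sqrt_pos.2 (neg_pos.2 hv)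
  have hs2 : s ^ 2 = -lorentz v v := Real.sq_sqrt (neg_nonneg.2 hv.le)
  have hnorm : ∀ t : ℝ, t ^ 2 = s⁻¹ ^ 2 → lorentz (t • v) (t • v) = -1 := by
    intro t ht
    rw [lorentz_smul_left, lorentz_smul_right, ← mul_assoc, ← sq, ht, inv_pow, hs2, inv_neg,
      neg_mul, inv_mul_cancel₀ hv.ne]
  rcases hv4.lt_or_gt with hneg | hpos
  · refine ⟨-s⁻¹, by simp [hs.ne'], ⟨-s⁻¹ • v, hnorm _ (neg_sq _), ?_⟩, rfl⟩
    simpa using mul_pos_of_neg_of_neg (neg_neg_of_pos (inv_pos.2 hs)) hneg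
  · refine ⟨s⁻¹, by simp [hs.ne'], ⟨s⁻¹ • v, hnorm _ rfl, ?_⟩, rfl⟩
    simpa using mul_pos (inv_pos.2 hs) hpos

lemma exists_lorentz_add_smul_self_neg {v : Fin 5 → ℝ} (hv : lorentz v v < 0)
    (w : Fin 5 → ℝ) : ∃ c : ℝ, lorentz (w + c • v) (w + c • v) < 0 := by
  set k := -lorentz v v
  have hk : 0 < k := neg_pos.2 hv
  refine ⟨1 + (|lorentz w w| + 2 * |lorentz w v|) / k, ?_⟩
  set c := 1 + (|lorentz w w| + 2 * |lorentz w v|) / k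
  have hck : c * k = k + |lorentz w w| + 2 * |lorentz w v| := by
    simp only [c]; field_simp; ring
  have hc : 1 ≤ c := le_add_of_nonneg_right (by positivity)
  have hexp : lorentz (w + c • v) (w + c • v) =
      lorentz w w + 2 * c * lorentz w v - c * (c * k) := by
    simp only [k, lorentz_add_left, lorentz_add_right, lorentz_smul_left, lorentz_smul_right,
      lorentz_comm v w]
    ring
  rw [hexp, hck]
  have h1 : c * lorentz w v ≤ c * |lorentz w v| :=
    mul_le_mul_of_nonneg_left (le_abs_self _) (by linarith)
  have h2 : |lorentz w w| ≤ c * |lorentz w w| := le_mul_of_one_le_left (abs_nonneg _) hc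
  nlinarith [le_abs_self (lorentz w w), mul_pos (by linarith : (0:ℝ) < c) hk]

def IsLorentzReflection (f : H4 → H4) (V : Submodule ℝ (Fin 5 → ℝ)) : Prop :=
  ∀ x : H4, (f x).1 + x.1 ∈ V ∧ (f x).1 - x.1 ∈ lorentzOrtho V

lemma inf_lorentzOrtho_eq_bot {V : Submodule ℝ (Fin 5 → ℝ)} {v₀ : Fin 5 → ℝ} (hv₀V : v₀ ∈ V)
    (hv₀ : lorentz v₀ v₀ < 0) : V ⊓ lorentzOrtho V = ⊥ :=
  eq_bot_iff.2 fun u ⟨huV, hu⟩ =>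
    (Submodule.mem_bot ℝ).2 (eq_zero_of_lorentz_self_nonpos hv₀ (hu v₀ hv₀V) (hu u huV).le)

lemma mem_lorentzOrtho_of_forall_timelike {V : Submodule ℝ (Fin 5 → ℝ)} {v₀ d : Fin 5 → ℝ}
    (hv₀V : v₀ ∈ V) (hv₀ : lorentz v₀ v₀ < 0)
    (h : ∀ v ∈ V, lorentz v v < 0 → lorentz d v = 0) : d ∈ lorentzOrtho V := by
  intro w hw
  obtain ⟨c, hc⟩ := exists_lorentz_add_smul_self_neg hv₀ w
  have := h _ (V.add_mem hw (V.smul_mem c hv₀V)) hc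
  rwa [lorentz_add_right, lorentz_smul_right, h v₀ hv₀V hv₀, mul_zero, add_zero] at this

lemma sub_mem_lorentzOrtho_of_forall_fixed {f : H4 → H4} {V : Submodule ℝ (Fin 5 → ℝ)}
    (hf : ∀ x y : H4, lorentz (f x).1 (f y).1 = lorentz x.1 y.1)
    (hfix : ∀ x : H4, x.1 ∈ V → f x = x) {v₀ : Fin 5 → ℝ} (hv₀V : v₀ ∈ V)
    (hv₀ : lorentz v₀ v₀ < 0) (y : H4) : (f y).1 - y.1 ∈ lorentzOrtho V := by
  refine mem_lorentzOrtho_of_forall_timelike hv₀V hv₀ fun v hvV hv => ?_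
  obtain ⟨t, ht, x, hx⟩ := exists_smul_mem_H4 hv
  have hxV : x.1 ∈ V := hx ▸ V.smul_mem t hvV
  have : t * lorentz ((f y).1 - y.1) v = 0 := by
    rw [← lorentz_smul_right, ← hx, lorentz_sub_left, ← hf y x, hfix x hxV, sub_self]
  exact (mul_eq_zero.1 this).resolve_left ht

lemma exists_fixed_smul_add {f : H4 → H4}
    (hf : ∀ x y : H4, lorentz (f x).1 (f y).1 = lorentz x.1 y.1) (hinv : ∀ x, f (f x) = x)
    (y : H4) : ∃ t : ℝ, t ≠ 0 ∧ ∃ m : H4, m.1 = t • (y.1 + (f y).1) ∧ f m = m := by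
  have hv : lorentz (y.1 + (f y).1) (y.1 + (f y).1) < 0 := by
    rw [lorentz_add_left, lorentz_add_right, lorentz_add_right, y.2.1, (f y).2.1,
      lorentz_comm (f y).1]
    linarith [y.lorentz_le_neg_one (f y)]
  obtain ⟨t, ht, m, hm⟩ := exists_smul_mem_H4 hv
  refine ⟨t, ht, m, hm, H4.eq_of_lorentz_eq_neg_one ?_⟩
  calc lorentz (f m).1 m.1
      = t * (lorentz (f m).1 (f (f y)).1 + lorentz (f m).1 (f y).1) := by
        rw [hinv, hm, lorentz_smul_right, lorentz_add_right]
    _ = t * (lorentz m.1 (f y).1 + lorentz m.1 y.1) := by rw [hf, hf]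
    _ = lorentz m.1 (t • (y.1 + (f y).1)) := by
        rw [lorentz_smul_right, lorentz_add_right, add_comm]
    _ = -1 := by rw [← hm]; exact m.2.1

lemma IsHalfTurn.isLorentzReflection {f : H4 → H4} {V : Submodule ℝ (Fin 5 → ℝ)}
    (hf : IsHalfTurn f {x : H4 | x.1 ∈ V}) {v₀ : H4} (hv₀ : v₀.1 ∈ V) :
    IsLorentzReflection f V := by
  obtain ⟨⟨-, hiso⟩, hinv, hfix⟩ := hf
  have hfixed : ∀ x : H4, f x = x ↔ x.1 ∈ V := fun x => Set.ext_iff.1 hfix x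
  intro y
  refine ⟨?_, sub_mem_lorentzOrtho_of_forall_fixed hiso (fun x => (hfixed x).2) hv₀
    v₀.lorentz_self_neg y⟩
  obtain ⟨t, ht, m, hm, hfm⟩ := exists_fixed_smul_add hiso (congrFun hinv) y
  rw [add_comm, ← inv_smul_smul₀ ht (y.1 + (f y).1), ← hm]
  exact V.smul_mem _ ((hfixed m).1 hfm)

lemma IsLorentzReflection.apply_eq {f : H4 → H4} {V : Submodule ℝ (Fin 5 → ℝ)}
    (hf : IsLorentzReflection f V) (hV : V ⊓ lorentzOrtho V = ⊥) {x : H4} {a b : Fin 5 → ℝ}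
    (ha : a ∈ V) (hb : b ∈ lorentzOrtho V) (hx : x.1 = a + b) : (f x).1 = a - b := by
  have hmem : (f x).1 - (a - b) ∈ V ⊓ lorentzOrtho V := by
    constructor
    · have : (f x).1 - (a - b) = ((f x).1 + x.1) - (a + a) := by rw [hx]; abel
      rw [this]
      exact V.sub_mem (hf x).1 (V.add_mem ha ha)
    · have : (f x).1 - (a - b) = ((f x).1 - x.1) + (b + b) := by rw [hx]; abel
      rw [this]
      exact add_mem (hf x).2 (add_mem hb hb)
  rw [hV] at hmem
  exact sub_eq_zero.1 ((Submodule.mem_bot ℝ).1 hmem)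

lemma IsLorentzReflection.fixedPoints_comp {f g : H4 → H4} {V W : Submodule ℝ (Fin 5 → ℝ)}
    (hf : IsLorentzReflection f V) (hg : IsLorentzReflection g W)
    (hV : V ⊓ lorentzOrtho V = ⊥) (hW : W ⊓ lorentzOrtho W = ⊥) :
    {x : H4 | f (g x) = x} = {x : H4 | x.1 ∈ (V ⊓ W) ⊔ lorentzOrtho (V ⊔ W)} := by
  ext x
  simp only [Set.mem_ofPred_eq, lorentzOrtho_sup]
  constructor
  · intro hx
    have hsum : x.1 + (g x).1 ∈ V ⊓ W := by
      refine ⟨?_, add_comm (g x).1 x.1 ▸ (hg x).1⟩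
      simpa [hx] using (hf (g x)).1
    have hdiff : (g x).1 - x.1 ∈ lorentzOrtho V ⊓ lorentzOrtho W := by
      refine ⟨?_, (hg x).2⟩
      simpa [hx] using neg_mem (hf (g x)).2
    have hdecomp : x.1 = (2⁻¹ : ℝ) • (x.1 + (g x).1) + (-(2⁻¹ : ℝ)) • ((g x).1 - x.1) := by
      module
    rw [hdecomp]
    exact Submodule.add_mem_sup (Submodule.smul_mem _ _ hsum) (Submodule.smul_mem _ _ hdiff)
  · intro hx
    obtain ⟨a, ⟨haV, haW⟩, b, ⟨hbV, hbW⟩, hab⟩ := Submodule.mem_sup.1 hx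
    have hgx : (g x).1 = a + -b := by rw [hg.apply_eq hW haW hbW hab.symm, sub_eq_add_neg]
    apply Subtype.ext
    rw [hf.apply_eq hV haV (neg_mem hbV) hgx, sub_neg_eq_add, hab]

theorem halfTurn_comp_along_line_typeI_elliptic_general
    (V W : Submodule ℝ (Fin 5 → ℝ))
    (P Q : Set H4) (hPV : P = {x : H4 | x.1 ∈ V}) (hQW : Q = {x : H4 | x.1 ∈ W})
    (hLne : ∃ x : H4, x.1 ∈ V ⊓ W)
    (f g : H4 → H4) (hf : IsHalfTurn f P) (hg : IsHalfTurn g Q) :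
    {x : H4 | f (g x) = x} = {x : H4 | x.1 ∈ (V ⊓ W) ⊔ lorentzOrtho (V ⊔ W)} := by
  obtain ⟨v₀, hv₀V, hv₀W⟩ := hLne
  subst hPV hQW
  exact (hf.isLorentzReflection hv₀V).fixedPoints_comp (hg.isLorentzReflection hv₀W)
    (inf_lorentzOrtho_eq_bot hv₀V v₀.lorentz_self_neg)
    (inf_lorentzOrtho_eq_bot hv₀W v₀.lorentz_self_neg)

/-- If `P` and `Q` are distinct planes of `ℍ⁴` meeting in a geodesic line `L`
(so `V ⊓ W` is 2-dimensional and time-like), then `H_P ∘ H_Q` is a type-I elliptic isometry: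
its fixed-point set is exactly the plane through `L` orthogonal to the hyperplane spanned by
`P ∪ Q`, namely the plane cut out by `(V ⊓ W) ⊔ (V ⊔ W)^⊥ᴸ`. -/
theorem halfTurn_comp_along_line_typeI_elliptic
    (V W : Submodule ℝ (Fin 5 → ℝ))
    (hV : Module.finrank ℝ V = 3) (hW : Module.finrank ℝ W = 3) (hVW : V ≠ W)
    (P Q : Set H4) (hPV : P = {x : H4 | x.1 ∈ V}) (hQW : Q = {x : H4 | x.1 ∈ W})
    (hline : Module.finrank ℝ (V ⊓ W : Submodule ℝ (Fin 5 → ℝ)) = 2)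
    (hLne : ∃ x : H4, x.1 ∈ V ⊓ W)
    (f g : H4 → H4) (hf : IsHalfTurn f P) (hg : IsHalfTurn g Q) :
    {x : H4 | f (g x) = x} = {x : H4 | x.1 ∈ (V ⊓ W) ⊔ lorentzOrtho (V ⊔ W)} :=
  halfTurn_comp_along_line_typeI_elliptic_general V W P Q hPV hQW hLne f g hf hg
end

section
/- Let δ be a pure hyperbolic isometry of H^4 with axis L, and let P be a plane in H^4. Then P is orthogonal to L (P meets L in exactly one point and the tangent space of P is orthogonal to the direction of L there) if and only if ∂P = s ∩ t for some sphere s ∈ F_δ and sphere t ∈ T_δ, where F_δ is the set of boundaries of hyperplanes orthogonal to L and T_δ is the set of boundaries of hyperplanes containing L. -/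
lemma lorentz_add_left_s19 (a b c : Fin 5 → ℝ) : lorentz (a + b) c = lorentz a c + lorentz b c := by
  simp only [lorentz, Pi.add_apply]; ring
lemma lorentz_smul_left_s19 (r : ℝ) (a b : Fin 5 → ℝ) : lorentz (r • a) b = r * lorentz a b := by
  simp only [lorentz, Pi.smul_apply, smul_eq_mul]; ring

lemma lorentz_pos_of_orth (x u : Fin 5 → ℝ) (hx : lorentz x x = -1)
    (hxu : lorentz u x = 0) (hu : u ≠ 0) : 0 < lorentz u u := by
  by_contra h
  push_neg at h
  unfold lorentz at hx hxu h
  have main : (u 0^2+u 1^2+u 2^2+u 3^2) +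
      ((u 0*x 1-u 1*x 0)^2 + (u 0*x 2-u 2*x 0)^2 + (u 0*x 3-u 3*x 0)^2 +
       (u 1*x 2-u 2*x 1)^2 + (u 1*x 3-u 3*x 1)^2 + (u 2*x 3-u 3*x 2)^2) =
      (u 0*u 0+u 1*u 1+u 2*u 2+u 3*u 3-u 4*u 4)*(x 4*x 4) := by
    linear_combination (u 0^2+u 1^2+u 2^2+u 3^2) * hx -
      (u 0*x 0+u 1*x 1+u 2*x 2+u 3*x 3 + u 4*x 4) * hxu
  have hprod : 0 ≤ (-(u 0*u 0+u 1*u 1+u 2*u 2+u 3*u 3-u 4*u 4))*(x 4*x 4) :=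
    mul_nonneg (by linarith) (mul_self_nonneg _)
  have key : u 0^2 + u 1^2 + u 2^2 + u 3^2 ≤ 0 := by
    have s1 := sq_nonneg (u 0*x 1-u 1*x 0); have s2 := sq_nonneg (u 0*x 2-u 2*x 0)
    have s3 := sq_nonneg (u 0*x 3-u 3*x 0); have s4 := sq_nonneg (u 1*x 2-u 2*x 1)
    have s5 := sq_nonneg (u 1*x 3-u 3*x 1); have s6 := sq_nonneg (u 2*x 3-u 3*x 2)
    nlinarith [main, hprod]
  have q0 := sq_nonneg (u 0); have q1 := sq_nonneg (u 1)
  have q2 := sq_nonneg (u 2); have q3 := sq_nonneg (u 3)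
  have h0 : u 0 = 0 := pow_eq_zero_iff two_ne_zero |>.mp (le_antisymm (by linarith) q0)
  have h1 : u 1 = 0 := pow_eq_zero_iff two_ne_zero |>.mp (le_antisymm (by linarith) q1)
  have h2 : u 2 = 0 := pow_eq_zero_iff two_ne_zero |>.mp (le_antisymm (by linarith) q2)
  have h3 : u 3 = 0 := pow_eq_zero_iff two_ne_zero |>.mp (le_antisymm (by linarith) q3)
  clear main hprod key q0 q1 q2 q3 h
  have h14 : 1 ≤ x 4 * x 4 := by
    have := mul_self_nonneg (x 0); have := mul_self_nonneg (x 1)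
    have := mul_self_nonneg (x 2); have := mul_self_nonneg (x 3)
    linarith
  have h4 : u 4 = 0 := by
    rw [h0, h1, h2, h3] at hxu
    have hx4 : x 4 ≠ 0 := by intro h'; rw [h'] at h14; norm_num at h14
    have : u 4 * x 4 = 0 := by linarith
    exact (mul_eq_zero.mp this).resolve_right hx4
  exact hu (funext fun i => by fin_cases i <;> simp [h0, h1, h2, h3, h4])

lemma lorentz_add_right_s19 (a b c : Fin 5 → ℝ) : lorentz a (b + c) = lorentz a b + lorentz a c := by
  simp only [lorentz, Pi.add_apply]; ring
lemma lorentz_smul_right_s19 (r : ℝ) (a b : Fin 5 → ℝ) : lorentz a (r • b) = r * lorentz a b := by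
  simp only [lorentz, Pi.smul_apply, smul_eq_mul]; ring
lemma lorentz_sub_left_s19 (a b c : Fin 5 → ℝ) : lorentz (a - b) c = lorentz a c - lorentz b c := by
  simp only [lorentz, Pi.sub_apply]; ring

noncomputable def Bl : (Fin 5 → ℝ) →ₗ[ℝ] (Fin 5 → ℝ) →ₗ[ℝ] ℝ :=
  LinearMap.mk₂ ℝ lorentz lorentz_add_left_s19 lorentz_smul_left_s19 lorentz_add_right_s19 lorentz_smul_right_s19

@[simp] lemma Bl_apply (a b : Fin 5 → ℝ) : Bl a b = lorentz a b := rfl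

lemma finrank_ker_succ {M : Type*} [AddCommGroup M] [Module ℝ M] [FiniteDimensional ℝ M]
    (φ : M →ₗ[ℝ] ℝ) {c : M} (hc : φ c ≠ 0) :
    Module.finrank ℝ (LinearMap.ker φ) + 1 = Module.finrank ℝ M := by
  have hsurj : Function.Surjective φ := fun y =>
    ⟨(y * (φ c)⁻¹) • c, by rw [map_smul, smul_eq_mul]; field_simp⟩
  have h := LinearMap.finrank_range_add_finrank_ker φ
  rw [LinearMap.range_eq_top.mpr hsurj, finrank_top, Module.finrank_self] at h
  omega

lemma mem_span_of_finrank_one {M : Type*} [AddCommGroup M] [Module ℝ M] [FiniteDimensional ℝ M]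
    (W : Submodule ℝ M) (hW : Module.finrank ℝ W = 1) {u : M} (hu : u ∈ W) (hu0 : u ≠ 0)
    {b : M} (hb : b ∈ W) : ∃ c : ℝ, b = c • u := by
  have hsp : Submodule.span ℝ {u} = W := by
    apply Submodule.eq_of_le_of_finrank_le (Submodule.span_le.2 (by simpa using hu))
    rw [hW, finrank_span_singleton hu0]
  rw [← hsp] at hb
  obtain ⟨c, hc⟩ := Submodule.mem_span_singleton.mp hb
  exact ⟨c, hc.symm⟩

lemma lorentz_proj_orth {x : Fin 5 → ℝ} (hx : lorentz x x = -1) (w : Fin 5 → ℝ) :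
    lorentz (w + lorentz w x • x) x = 0 := by
  rw [lorentz_add_left_s19, lorentz_smul_left_s19, hx]; ring

lemma eq_zero_of_orth {x u : Fin 5 → ℝ} (hx : lorentz x x = -1)
    (hxu : lorentz u x = 0) (huu : lorentz u u = 0) : u = 0 := by
  by_contra h
  exact absurd huu (ne_of_gt (lorentz_pos_of_orth x u hx hxu h))




/-- The totally geodesic subspaces of `ℍ⁴` cut out by subspaces `A` and `B` of `ℝ^{4,1}` meet
orthogonally at the point `x`: the tangent spaces at `x` are Lorentz-orthogonal. -/
def OrthAt (A B : Submodule ℝ (Fin 5 → ℝ)) (x : Fin 5 → ℝ) : Prop :=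
  x ∈ A ∧ x ∈ B ∧
    ∀ u ∈ A, ∀ w ∈ B, lorentz u x = 0 → lorentz w x = 0 → lorentz u w = 0

/-- Let `δ` be a pure hyperbolic isometry of `ℍ⁴` with axis `L` (the geodesic
cut out by the 2-dimensional time-like subspace `U`): `δ` is fixed-point free, leaves `L`
invariant, and leaves every hyperplane containing `L` invariant.  Then a plane `P` (cut out by
the 3-dimensional subspace `V`) is orthogonal to `L` — it meets `L` in exactly one point, with
tangent spaces orthogonal there — if and only if `∂P = s ∩ t` for some `s ∈ F_δ` (the boundary
of a hyperplane orthogonal to `L`) and `t ∈ T_δ` (the boundary of a hyperplane containing `L`),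
i.e. iff `V = S ⊓ T` for a 4-dimensional subspace `S` whose hyperplane meets `L` orthogonally
and a 4-dimensional subspace `T` with `U ≤ T`. -/
theorem plane_in_halfTurn_bank_iff_orthogonal_to_axis
    (U : Submodule ℝ (Fin 5 → ℝ)) (hU : Module.finrank ℝ U = 2)
    (hUne : ∃ x : H4, x.1 ∈ U)
    (δ : H4 → H4) (hδ : IsIsom δ) (hδfree : ∀ x : H4, δ x ≠ x)
    (hδax : δ '' {x : H4 | x.1 ∈ U} = {x : H4 | x.1 ∈ U})
    (hδpure : ∀ T : Submodule ℝ (Fin 5 → ℝ), Module.finrank ℝ T = 4 → U ≤ T →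
      δ '' {x : H4 | x.1 ∈ T} = {x : H4 | x.1 ∈ T})
    (V : Submodule ℝ (Fin 5 → ℝ)) (hV : Module.finrank ℝ V = 3)
    (hVne : ∃ x : H4, x.1 ∈ V) :
    ((∃ x : H4, OrthAt V U x.1 ∧ ∀ y : H4, y.1 ∈ V → y.1 ∈ U → y = x) ↔
      ∃ S T : Submodule ℝ (Fin 5 → ℝ),
        Module.finrank ℝ S = 4 ∧ (∃ x : H4, OrthAt S U x.1) ∧
        Module.finrank ℝ T = 4 ∧ U ≤ T ∧
        V = S ⊓ T) := by
  constructor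
  · rintro ⟨x, ⟨hxV, hxU, horth⟩, -⟩
    have hx : lorentz x.1 x.1 = -1 := x.2.1
    have hx0 : x.1 ≠ 0 := by
      intro h; rw [h] at hx; simp [lorentz] at hx
    -- the tangent direction u of the axis at x
    set ψ : U →ₗ[ℝ] ℝ := (Bl x.1).comp U.subtype with hψ
    have hψx : ψ ⟨x.1, hxU⟩ ≠ 0 := by simp [hψ, hx]
    have hkerψ : Module.finrank ℝ (LinearMap.ker ψ) = 1 := by
      have := finrank_ker_succ ψ hψx; omega
    have : Nontrivial (LinearMap.ker ψ) := by
      apply Module.nontrivial_of_finrank_pos (R := ℝ); omega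
    obtain ⟨u', hu'0⟩ := exists_ne (0 : LinearMap.ker ψ)
    set u : Fin 5 → ℝ := (u'.1 : Fin 5 → ℝ) with hu_def
    have huU : u ∈ U := u'.1.2
    have hu0 : u ≠ 0 := by
      intro h
      apply hu'0
      apply Subtype.ext; apply Subtype.ext; exact h
    have hxu : lorentz x.1 u = 0 := u'.2
    have hux : lorentz u x.1 = 0 := by rw [lorentz_comm]; exact hxu
    have hupos : 0 < lorentz u u := lorentz_pos_of_orth x.1 u hx hux hu0
    -- S
    set S : Submodule ℝ (Fin 5 → ℝ) := LinearMap.ker (Bl u) with hS_def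
    have hmemS : ∀ w, w ∈ S ↔ lorentz u w = 0 := fun w => by
      simp [hS_def, LinearMap.mem_ker]
    have hS4 : Module.finrank ℝ S = 4 := by
      have hne : Bl u u ≠ 0 := by simpa using ne_of_gt hupos
      have := finrank_ker_succ (Bl u) hne
      rw [Module.finrank_fin_fun, ← hS_def] at this; omega
    have hVS : V ≤ S := by
      intro v hv
      rw [hmemS]
      have hv' : lorentz (v + lorentz v x.1 • x.1) x.1 = 0 := lorentz_proj_orth hx v
      have hv'V : v + lorentz v x.1 • x.1 ∈ V := V.add_mem hv (V.smul_mem _ hxV)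
      have := horth _ hv'V u huU hv' hux
      have expand : lorentz (v + lorentz v x.1 • x.1) u
          = lorentz v u + lorentz v x.1 * lorentz x.1 u := by
        rw [lorentz_add_left_s19, lorentz_smul_left_s19]
      rw [lorentz_comm]
      rw [expand, hxu, mul_zero, add_zero] at this
      exact this
    have hxS : x.1 ∈ S := (hmemS _).mpr hux
    -- V ⊓ U = span x
    have hinf : V ⊓ U = Submodule.span ℝ {x.1} := by
      apply le_antisymm
      · rintro w ⟨hwV, hwU⟩
        set c := lorentz w x.1 with hc
        have hw' : lorentz (w + c • x.1) x.1 = 0 := lorentz_proj_orth hx w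
        have hw'V : w + c • x.1 ∈ V := V.add_mem hwV (V.smul_mem _ hxV)
        have hw'U : w + c • x.1 ∈ U := U.add_mem hwU (U.smul_mem _ hxU)
        have h0 := horth _ hw'V _ hw'U hw' hw'
        have hz : w + c • x.1 = 0 := eq_zero_of_orth hx hw' h0
        have : w = (-c) • x.1 := by
          rw [neg_smul]; rw [eq_neg_iff_add_eq_zero]; exact hz
        rw [this]
        exact Submodule.smul_mem _ _ (Submodule.mem_span_singleton_self _)
      · rw [Submodule.span_le, Set.singleton_subset_iff]
        exact ⟨hxV, hxU⟩
    have hinf1 : Module.finrank ℝ (V ⊓ U : Submodule ℝ (Fin 5 → ℝ)) = 1 := by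
      rw [hinf]; exact finrank_span_singleton hx0
    -- T
    set T : Submodule ℝ (Fin 5 → ℝ) := V ⊔ U with hT_def
    have hT4 : Module.finrank ℝ T = 4 := by
      have := Submodule.finrank_sup_add_finrank_inf_eq V U
      rw [hV, hU, hinf1, ← hT_def] at this; omega
    -- key: elements of U orthogonal to x are multiples of u
    have htan : ∀ b ∈ U, lorentz b x.1 = 0 → ∃ c : ℝ, b = c • u := by
      intro b hbU hbx
      have hbker : (⟨b, hbU⟩ : U) ∈ LinearMap.ker ψ := by
        simp [hψ, LinearMap.mem_ker]
        rw [lorentz_comm]; exact hbx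
      have hu'1 : (u'.1 : U) ≠ 0 := fun h => hu'0 (Subtype.ext h)
      obtain ⟨c, hc⟩ := mem_span_of_finrank_one (LinearMap.ker ψ) hkerψ u'.2 hu'1 hbker
      exact ⟨c, by
        have := congrArg (fun z : U => (z : Fin 5 → ℝ)) hc
        simpa using this⟩
    refine ⟨S, T, hS4, ⟨x, hxS, hxU, ?_⟩, hT4, le_sup_right, ?_⟩
    · -- OrthAt S U x
      intro a haS b hbU hax hbx
      obtain ⟨c, rfl⟩ := htan b hbU hbx
      rw [lorentz_smul_right_s19]
      have : lorentz u a = 0 := (hmemS a).mp haS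
      rw [lorentz_comm] at this
      rw [this, mul_zero]
    · -- V = S ⊓ T
      apply le_antisymm (le_inf hVS le_sup_left)
      rintro w ⟨hwS, hwT⟩
      obtain ⟨v, hvV, p, hpU, rfl⟩ := Submodule.mem_sup.mp hwT
      set c := lorentz p x.1 with hc
      have hbU : p + c • x.1 ∈ U := U.add_mem hpU (U.smul_mem _ hxU)
      have hbx : lorentz (p + c • x.1) x.1 = 0 := lorentz_proj_orth hx p
      obtain ⟨d, hd⟩ := htan _ hbU hbx
      -- v + p = (v - c•x + ... ) rearrange: p = d•u - c•x
      have hp : p = d • u - c • x.1 := by rw [← hd]; abel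
      have hv'V : v - c • x.1 ∈ V := V.sub_mem hvV (V.smul_mem _ hxV)
      have hw : v + p = (v - c • x.1) + d • u := by rw [hp]; abel
      have hSw : lorentz u (v + p) = 0 := (hmemS _).mp hwS
      have hv'S : lorentz u (v - c • x.1) = 0 := (hmemS _).mp (hVS hv'V)
      rw [hw, lorentz_add_right_s19, hv'S, lorentz_smul_right_s19, zero_add] at hSw
      have hd0 : d = 0 := by
        rcases mul_eq_zero.mp hSw with h | h
        · exact h
        · exact absurd h (ne_of_gt hupos)
      rw [hw, hd0, zero_smul, add_zero]
      exact hv'V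
  · rintro ⟨S, T, -, ⟨x0, hx0S, hx0U, horthS⟩, -, hUT, hVST⟩
    have hx : lorentz x0.1 x0.1 = -1 := x0.2.1
    have hVS : V ≤ S := hVST ▸ inf_le_left
    refine ⟨x0, ⟨?_, hx0U, ?_⟩, ?_⟩
    · rw [hVST]; exact ⟨hx0S, hUT hx0U⟩
    · intro a haV b hbU hax hbx
      exact horthS a (hVS haV) b hbU hax hbx
    · intro y hyV hyU
      set c := lorentz y.1 x0.1 with hc
      have hw' : lorentz (y.1 + c • x0.1) x0.1 = 0 := lorentz_proj_orth hx y.1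
      have hw'S : y.1 + c • x0.1 ∈ S := S.add_mem (hVS hyV) (S.smul_mem _ hx0S)
      have hw'U : y.1 + c • x0.1 ∈ U := U.add_mem hyU (U.smul_mem _ hx0U)
      have h0 := horthS _ hw'S _ hw'U hw' hw'
      have hz : y.1 + c • x0.1 = 0 := eq_zero_of_orth hx hw' h0
      have hy1 : y.1 = (-c) • x0.1 := by
        rw [neg_smul, eq_neg_iff_add_eq_zero]; exact hz
      have hyy : lorentz y.1 y.1 = -1 := y.2.1
      rw [hy1, lorentz_smul_left_s19, lorentz_smul_right_s19, hx] at hyy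
      have hc2 : c * c = 1 := by nlinarith
      have hy4 : 0 < y.1 4 := y.2.2
      have hx4 : 0 < x0.1 4 := x0.2.2
      have hy4' : y.1 4 = -c * x0.1 4 := by rw [hy1]; simp
      have hcneg : c = -1 := by nlinarith
      apply Subtype.ext
      rw [hy1, hcneg]; simp
end
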